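/- arXiv:1109.6164 — 8 statements merged into one kernel-verified Lean document; each statement's English description precedes it below -/
import Mathlib

section
/- If K' is a compact subset of the reals with packing dimension strictly less than 1, and N is a positive integer with N > 1/(1 - dim_p K'), then the set F_N = {(x_0,...,x_{N-1}) ∈ ℝ^N : ∃ t ∈ ℝ, {x_0,...,x_{N-1}} ⊆ K' + t} has packing dimension at most N·dim_p K' + 1, which is strictly less than N. -/
open Filter Set MeasureTheory
open scoped Pointwise ENNReal

/-- Minimal number of `ε`-balls needed to cover `s` (as an element of `ℝ≥0∞`,
`⊤` if no finite cover exists). -/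
noncomputable def coverN {α : Type*} [PseudoMetricSpace α] (s : Set α) (ε : ℝ) : ℝ≥0∞ :=
  ⨅ (t : Finset α) (_ : s ⊆ ⋃ x ∈ t, Metric.ball x ε), (t.card : ℝ≥0∞)

open Classical in
/-- Upper box (Minkowski) dimension. -/
noncomputable def ubDim {α : Type*} [PseudoMetricSpace α] (s : Set α) : ℝ≥0∞ :=
  Filter.limsup (fun ε : ℝ =>
      if coverN s ε = ⊤ then ⊤
      else ENNReal.ofReal (Real.log (coverN s ε).toReal / Real.log ε⁻¹))
    (nhdsWithin (0 : ℝ) (Set.Ioi 0))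

/-- Packing dimension, defined as modified upper box dimension. -/
noncomputable def packingDim {α : Type*} [PseudoMetricSpace α] (s : Set α) : ℝ≥0∞ :=
  ⨅ (A : ℕ → Set α) (_ : s ⊆ ⋃ n, A n), ⨆ n, ubDim (A n)

/-! Cover `K'` by countably many sets `Aₙ` of upper box dimension `< d`. Then `F_N` is covered by
countably many sets `∏ i, A_{σ i} + [m, m + 1] • (1, …, 1)`, and for each of them the products of
`ε`-covers of the `A_{σ i}` with an `ε`-cover of `[m, m + 1]` give `O(ε ^ (-(N d + 1)))` balls of
radius `2 √N ε`. The strict bound `N d + 1 < N` is a rearrangement of `N > 1 / (1 - d)`. -/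

open Topology

section PseudoMetricSpace

variable {α : Type*} [PseudoMetricSpace α]

lemma exists_finset_card_lt_of_coverN_lt {s : Set α} {ε : ℝ}
    {K : ℝ≥0∞} (h : coverN s ε < K) :
    ∃ t : Finset α, s ⊆ ⋃ x ∈ t, Metric.ball x ε ∧ (t.card : ℝ≥0∞) < K := by
  simpa only [coverN, iInf_lt_iff, exists_prop] using h

lemma eventually_coverN_lt_of_ubDim_lt {s : Set α} {d : ℝ}
    (h : ubDim s < ENNReal.ofReal d) :
    ∀ᶠ ε in 𝓝[>] 0, coverN s ε < ENNReal.ofReal (ε ^ (-d)) := by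
  filter_upwards [eventually_lt_of_limsup_lt h, Ioo_mem_nhdsGT one_pos] with ε hε ⟨hε0, hε1⟩
  have hne : coverN s ε ≠ ⊤ := fun htop => by simp [htop] at hε
  rw [if_neg hne, ENNReal.ofReal_lt_ofReal_iff'] at hε
  have hL : 0 < Real.log ε⁻¹ := Real.log_pos (one_lt_inv_iff₀.2 ⟨hε0, hε1⟩)
  have hpow : 0 < ε ^ (-d) := Real.rpow_pos_of_pos hε0 _
  rw [← ENNReal.ofReal_toReal hne, ENNReal.ofReal_lt_ofReal_iff hpow]
  rcases ENNReal.toReal_nonneg.eq_or_lt with hn | hn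
  · rwa [← hn]
  · rw [← Real.log_lt_log_iff hn hpow, Real.log_rpow hε0]
    have := (div_lt_iff₀ hL).1 hε.1
    rw [Real.log_inv] at this
    linarith

lemma ubDim_le_of_eventually_coverN_le {s : Set α}
    {C D : ℝ} (hD : 0 ≤ D)
    (h : ∀ᶠ ε in 𝓝[>] 0, coverN s ε ≤ ENNReal.ofReal (C * ε ^ (-D))) :
    ubDim s ≤ ENNReal.ofReal D := by
  have hlog : Tendsto (fun ε : ℝ => Real.log ε⁻¹) (𝓝[>] 0) atTop := by
    simpa only [Function.comp_def, Real.log_inv] using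
      tendsto_neg_atBot_atTop.comp Real.tendsto_log_nhdsGT_zero
  have hbound : Tendsto (fun ε : ℝ => ENNReal.ofReal (|Real.log C| / Real.log ε⁻¹ + D))
      (𝓝[>] 0) (𝓝 (ENNReal.ofReal D)) := by
    simpa using ENNReal.tendsto_ofReal ((tendsto_const_nhds.div_atTop hlog).add_const D)
  refine (limsup_le_limsup ?_).trans_eq hbound.limsup_eq
  filter_upwards [h, Ioo_mem_nhdsGT one_pos] with ε hε ⟨hε0, hε1⟩
  have hne : coverN s ε ≠ ⊤ := ne_top_of_le_ne_top ENNReal.ofReal_ne_top hε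
  have hL : 0 < Real.log ε⁻¹ := Real.log_pos (one_lt_inv_iff₀.2 ⟨hε0, hε1⟩)
  rw [if_neg hne]
  refine ENNReal.ofReal_le_ofReal ((div_le_iff₀ hL).2 ?_)
  rw [add_mul, div_mul_cancel₀ _ hL.ne']
  set n := (coverN s ε).toReal
  rcases le_or_gt n 1 with hn | hn
  · exact (Real.log_nonpos ENNReal.toReal_nonneg hn).trans (by positivity)
  · have hpos : 0 < C * ε ^ (-D) := by
      by_contra! hle
      rw [ENNReal.ofReal_of_nonpos hle, nonpos_iff_eq_zero] at hε
      norm_num [n, hε] at hn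
    have hnC : n ≤ C * ε ^ (-D) := ENNReal.toReal_le_of_le_ofReal hpos.le hε
    have hC : 0 < C := pos_of_mul_pos_left hpos (Real.rpow_nonneg hε0.le _)
    calc Real.log n ≤ Real.log (C * ε ^ (-D)) := Real.log_le_log (by linarith) hnC
      _ = Real.log C + D * Real.log ε⁻¹ := by
        rw [Real.log_mul hC.ne' (Real.rpow_pos_of_pos hε0 _).ne', Real.log_rpow hε0,
          Real.log_inv]
        ring
      _ ≤ |Real.log C| + D * Real.log ε⁻¹ := by gcongr; exact le_abs_self _

lemma ubDim_le_of_eventually_coverN_mul_le {s : Set α}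
    {c C D : ℝ} (hc : 0 < c) (hD : 0 ≤ D)
    (h : ∀ᶠ ε in 𝓝[>] 0, coverN s (c * ε) ≤ ENNReal.ofReal (C * ε ^ (-D))) :
    ubDim s ≤ ENNReal.ofReal D := by
  refine ubDim_le_of_eventually_coverN_le (C := C * c ^ D) hD ?_
  filter_upwards [eventually_nhdsGT_zero_mul_left (inv_pos.2 hc) h,
    self_mem_nhdsWithin] with δ hδ (hδ0 : 0 < δ)
  rwa [mul_inv_cancel_left₀ hc.ne', Real.mul_rpow (inv_nonneg.2 hc.le) hδ0.le,
    Real.inv_rpow hc.le, Real.rpow_neg hc.le, inv_inv, ← mul_assoc] at hδ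

lemma exists_ubDim_lt_of_packingDim_lt {s : Set α}
    {b : ℝ≥0∞} (h : packingDim s < b) :
    ∃ A : ℕ → Set α, s ⊆ ⋃ n, A n ∧ ∀ n, ubDim (A n) < b := by
  simp only [packingDim, iInf_lt_iff] at h
  obtain ⟨A, hsA, hA⟩ := h
  exact ⟨A, hsA, fun n => (le_iSup (fun n => ubDim (A n)) n).trans_lt hA⟩

lemma packingDim_le_of_subset_iUnion {J : Type*} [Countable J]
    [Nonempty J] {s : Set α} {b : ℝ≥0∞} (A : J → Set α) (hsA : s ⊆ ⋃ j, A j)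
    (hA : ∀ j, ubDim (A j) ≤ b) : packingDim s ≤ b := by
  obtain ⟨f, hf⟩ := exists_surjective_nat J
  exact iInf₂_le_of_le (A ∘ f) (hsA.trans_eq (hf.iUnion_comp A).symm)
    (iSup_le fun n => hA (f n))

end PseudoMetricSpace

lemma exists_finset_Icc_subset_iUnion_ball {a b ε : ℝ} (hab : a ≤ b) (hε : 0 < ε) :
    ∃ u : Finset ℝ, Icc a b ⊆ ⋃ x ∈ u, Metric.ball x ε ∧ (u.card : ℝ) ≤ (b - a) / ε + 1 := by
  classical
  refine ⟨(Finset.range (⌊(b - a) / ε⌋₊ + 1)).image fun j : ℕ => a + j * ε, ?_, ?_⟩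
  · rintro s ⟨has, hsb⟩
    have hq : 0 ≤ (s - a) / ε := div_nonneg (by linarith) hε.le
    set j := ⌊(s - a) / ε⌋₊
    have hj : (j : ℝ) * ε ≤ s - a := (le_div_iff₀ hε).1 (Nat.floor_le hq)
    have hj' : s - a < (j + 1) * ε := (div_lt_iff₀ hε).1 (Nat.lt_floor_add_one _)
    have hjb : j ≤ ⌊(b - a) / ε⌋₊ := Nat.floor_le_floor (by gcongr)
    refine mem_iUnion₂.2 ⟨a + j * ε, Finset.mem_image.2 ⟨j, by simpa [Nat.lt_succ_iff], rfl⟩, ?_⟩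
    rw [Metric.mem_ball, Real.dist_eq, abs_lt]
    constructor <;> linarith
  · calc ((Finset.range (⌊(b - a) / ε⌋₊ + 1)).image fun j : ℕ => a + j * ε).card
        ≤ ((⌊(b - a) / ε⌋₊ + 1 : ℕ) : ℝ) := by
          exact_mod_cast Finset.card_image_le.trans (Finset.card_range _).le
      _ ≤ (b - a) / ε + 1 := by
          push_cast
          gcongr
          exact Nat.floor_le (div_nonneg (by linarith) hε.le)

lemma EuclideanSpace.dist_lt_sqrt_card_mul {ι : Type*} [Fintype ι] [Nonempty ι]
    {x y : EuclideanSpace ℝ ι} {r : ℝ} (h : ∀ i, dist (x i) (y i) < r) :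
    dist x y < √(Fintype.card ι) * r := by
  have hr : 0 < r := dist_nonneg.trans_lt (h (Classical.arbitrary ι))
  have hsum : ∑ i, dist (x i) (y i) ^ 2 < Fintype.card ι * r ^ 2 := by
    calc ∑ i, dist (x i) (y i) ^ 2 < ∑ _i : ι, r ^ 2 :=
          Finset.sum_lt_sum_of_nonempty Finset.univ_nonempty
            fun i _ => pow_lt_pow_left₀ (h i) dist_nonneg two_ne_zero
      _ = Fintype.card ι * r ^ 2 := by simp
  calc dist x y < √(Fintype.card ι * r ^ 2) :=
        EuclideanSpace.dist_eq x y ▸ Real.sqrt_lt_sqrt (by positivity) hsum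
    _ = √(Fintype.card ι) * r := by rw [Real.sqrt_mul (by positivity), Real.sqrt_sq hr.le]

/-- `(∏ i, C i) + S • (1, …, 1)`, so that `F_N = shiftedProd (fun _ => K') univ`. -/
def shiftedProd {ι : Type*} (C : ι → Set ℝ) (S : Set ℝ) : Set (EuclideanSpace ℝ ι) :=
  {x | ∃ s ∈ S, ∀ i, x i - s ∈ C i}

lemma coverN_shiftedProd_le {ι : Type*} [Fintype ι] [Nonempty ι] {C : ι → Set ℝ} {S : Set ℝ}
    {ε : ℝ} {t : ι → Finset ℝ} (ht : ∀ i, C i ⊆ ⋃ x ∈ t i, Metric.ball x ε)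
    {u : Finset ℝ} (hu : S ⊆ ⋃ x ∈ u, Metric.ball x ε) :
    coverN (shiftedProd C S) (2 * √(Fintype.card ι) * ε) ≤
      ((∏ i, (t i).card) * u.card : ℕ) := by
  classical
  let T : Finset (EuclideanSpace ℝ ι) :=
    (Fintype.piFinset t ×ˢ u).image fun p => WithLp.toLp 2 fun i => p.1 i + p.2
  have hT : T.card ≤ (∏ i, (t i).card) * u.card := by
    refine Finset.card_image_le.trans_eq ?_
    rw [Finset.card_product, Fintype.card_piFinset]
  refine (iInf₂_le T ?_).trans (by exact_mod_cast hT)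
  rintro x ⟨s, hs, hx⟩
  choose c hct hc using fun i => mem_iUnion₂.1 (ht i (hx i))
  obtain ⟨τ, hτu, hτ⟩ := mem_iUnion₂.1 (hu hs)
  refine mem_iUnion₂.2 ⟨WithLp.toLp 2 fun i => c i + τ,
    Finset.mem_image.2 ⟨(c, τ), Finset.mem_product.2 ⟨Fintype.mem_piFinset.2 hct, hτu⟩, rfl⟩, ?_⟩
  rw [Metric.mem_ball]
  refine (EuclideanSpace.dist_lt_sqrt_card_mul (r := 2 * ε) fun i => ?_).trans_eq (by ring)
  calc dist (x i) (c i + τ) = dist (x i - s + s) (c i + τ) := by rw [sub_add_cancel]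
    _ ≤ dist (x i - s) (c i) + dist s τ := dist_add_add_le _ _ _ _
    _ < 2 * ε := by linarith [Metric.mem_ball.1 (hc i), Metric.mem_ball.1 hτ]

lemma ubDim_shiftedProd_Icc_le {ι : Type*} [Fintype ι] [Nonempty ι] {C : ι → Set ℝ} {d : ℝ}
    (hC : ∀ i, ubDim (C i) < ENNReal.ofReal d) (m : ℝ) :
    ubDim (shiftedProd C (Icc m (m + 1))) ≤ ENNReal.ofReal (Fintype.card ι * d + 1) := by
  have hd : 0 < d := ENNReal.ofReal_pos.1 (zero_le.trans_lt (hC (Classical.arbitrary ι)))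
  refine ubDim_le_of_eventually_coverN_mul_le (c := 2 * √(Fintype.card ι)) (C := 2)
    (by positivity) (by positivity) ?_
  filter_upwards [eventually_all.2 fun i => eventually_coverN_lt_of_ubDim_lt (hC i),
    Ioc_mem_nhdsGT one_pos] with ε hε ⟨hε0, hε1⟩
  choose t ht hcard using fun i => exists_finset_card_lt_of_coverN_lt (hε i)
  obtain ⟨u, hu, hucard⟩ := exists_finset_Icc_subset_iUnion_ball (by linarith : m ≤ m + 1) hε0
  refine (coverN_shiftedProd_le ht hu).trans ?_
  rw [← ENNReal.ofReal_natCast]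
  refine ENNReal.ofReal_le_ofReal ?_
  have hu' : (u.card : ℝ) ≤ 2 * ε ^ (-1 : ℝ) := by
    rw [Real.rpow_neg_one]
    have : 1 ≤ ε⁻¹ := one_le_inv_iff₀.2 ⟨hε0, hε1⟩
    linarith [show (m + 1 - m) / ε = ε⁻¹ by field_simp; ring]
  push_cast
  calc (∏ i, ((t i).card : ℝ)) * u.card ≤ (∏ _i : ι, ε ^ (-d)) * (2 * ε ^ (-1 : ℝ)) := by
        gcongr with i
        exact (ENNReal.natCast_lt_ofReal.1 (hcard i)).le
    _ = 2 * ε ^ (-(Fintype.card ι * d + 1)) := by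
        rw [Finset.prod_const, Finset.card_univ, ← Real.rpow_natCast, ← Real.rpow_mul hε0.le,
          mul_left_comm, ← Real.rpow_add hε0]
        ring_nf

lemma packingDim_shiftedProd_univ_le_of_lt {ι : Type*} [Fintype ι] [Nonempty ι] {K : Set ℝ}
    {d : ℝ} (h : packingDim K < ENNReal.ofReal d) :
    packingDim (shiftedProd (fun _ : ι => K) univ) ≤ ENNReal.ofReal (Fintype.card ι * d + 1) := by
  obtain ⟨A, hKA, hA⟩ := exists_ubDim_lt_of_packingDim_lt h
  refine packingDim_le_of_subset_iUnion
    (fun p : (ι → ℕ) × ℤ => shiftedProd (fun i => A (p.1 i)) (Icc p.2 (p.2 + 1))) ?_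
    fun p => ubDim_shiftedProd_Icc_le (fun i => hA _) _
  rintro x ⟨s, -, hx⟩
  choose σ hσ using fun i => mem_iUnion.1 (hKA (hx i))
  exact mem_iUnion.2 ⟨(σ, ⌊s⌋), s, ⟨Int.floor_le s, (Int.lt_floor_add_one s).le⟩, hσ⟩

lemma packingDim_shiftedProd_univ_le {ι : Type*} [Fintype ι] [Nonempty ι] (K : Set ℝ) :
    packingDim (shiftedProd (fun _ : ι => K) univ) ≤ Fintype.card ι * packingDim K + 1 := by
  refine ENNReal.le_of_forall_pos_le_add fun r hr hlt => ?_
  have hcard : (0 : ℝ) < Fintype.card ι := by exact_mod_cast Fintype.card_pos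
  have hK : packingDim K ≠ ⊤ := by
    intro htop
    simp [htop, ENNReal.mul_top (Nat.cast_ne_zero.2 Fintype.card_ne_zero)] at hlt
  set d := (packingDim K).toReal + (r : ℝ) / Fintype.card ι
  have hd : packingDim K < ENNReal.ofReal d := by
    rw [ENNReal.ofReal_add ENNReal.toReal_nonneg (by positivity), ENNReal.ofReal_toReal hK]
    exact ENNReal.lt_add_right hK (by simpa using div_pos (NNReal.coe_pos.2 hr) hcard)
  refine (packingDim_shiftedProd_univ_le_of_lt hd).trans_eq ?_
  rw [show Fintype.card ι * d + 1 = Fintype.card ι * (packingDim K).toReal + 1 + r by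
      simp only [d]; field_simp; ring,
    ENNReal.ofReal_add (by positivity) r.coe_nonneg, ENNReal.ofReal_add (by positivity) zero_le_one,
    ENNReal.ofReal_mul (by positivity), ENNReal.ofReal_toReal hK, ENNReal.ofReal_natCast,
    ENNReal.ofReal_one, ENNReal.ofReal_coe_nnreal]

lemma ENNReal.natCast_mul_add_one_lt {d : ℝ≥0∞} {n : ℕ} (hd : d < 1) (hn : (1 - d)⁻¹ < n) :
    n * d + 1 < n := by
  have h1d : 1 - d ≠ 0 := (tsub_pos_iff_lt.2 hd).ne'
  have h1d' : 1 - d ≠ ⊤ := ENNReal.sub_ne_top ENNReal.one_ne_top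
  have hlt : 1 < n * (1 - d) := by
    simpa [ENNReal.inv_mul_cancel h1d h1d'] using ENNReal.mul_lt_mul_left h1d h1d' hn
  calc n * d + 1 < n * d + n * (1 - d) :=
        ENNReal.add_lt_add_left (ENNReal.mul_ne_top (ENNReal.natCast_ne_top n) hd.ne_top) hlt
    _ = n := by rw [← mul_add, add_tsub_cancel_of_le hd.le, mul_one]

theorem stmt0_general (K' : Set ℝ) (hdim : packingDim K' < 1)
    (N : ℕ) (hN : 0 < N)
    (hNbig : ((1 : ℝ≥0∞) - packingDim K')⁻¹ < (N : ℝ≥0∞)) :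
    packingDim {x : EuclideanSpace ℝ (Fin N) | ∃ t : ℝ, ∀ i, x i ∈ (fun k => k + t) '' K'}
        ≤ (N : ℝ≥0∞) * packingDim K' + 1 ∧
    packingDim {x : EuclideanSpace ℝ (Fin N) | ∃ t : ℝ, ∀ i, x i ∈ (fun k => k + t) '' K'}
        < (N : ℝ≥0∞) := by
  have hF : {x : EuclideanSpace ℝ (Fin N) | ∃ t : ℝ, ∀ i, x i ∈ (fun k => k + t) '' K'} =
      shiftedProd (fun _ => K') univ := by
    ext x
    simp [shiftedProd, image_add_right, sub_eq_add_neg]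
  have : Nonempty (Fin N) := Fin.pos_iff_nonempty.1 hN
  have hle := packingDim_shiftedProd_univ_le (ι := Fin N) K'
  rw [Fintype.card_fin, ← hF] at hle
  exact ⟨hle, hle.trans_lt (ENNReal.natCast_mul_add_one_lt hdim hNbig)⟩

theorem stmt0 (K' : Set ℝ) (hK : IsCompact K') (hdim : packingDim K' < 1)
    (N : ℕ) (hN : 0 < N)
    (hNbig : ((1 : ℝ≥0∞) - packingDim K')⁻¹ < (N : ℝ≥0∞)) :
    packingDim {x : EuclideanSpace ℝ (Fin N) | ∃ t : ℝ, ∀ i, x i ∈ (fun k => k + t) '' K'}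
        ≤ (N : ℝ≥0∞) * packingDim K' + 1 ∧
    packingDim {x : EuclideanSpace ℝ (Fin N) | ∃ t : ℝ, ∀ i, x i ∈ (fun k => k + t) '' K'}
        < (N : ℝ≥0∞) :=
  stmt0_general K' hdim N hN hNbig
end

section
/- For compact K' ⊆ ℝ and N ≥ 1, the set F_N = {(x_0,...,x_{N-1}) ∈ ℝ^N : ∃ t ∈ ℝ, ∀ i < N, x_i ∈ K' + t} is closed in ℝ^N. -/
theorem stmt1 (K' : Set ℝ) (hK : IsCompact K') (N : ℕ) (hN : 1 ≤ N) :
    IsClosed {x : EuclideanSpace ℝ (Fin N) | ∃ t : ℝ, ∀ i, x i ∈ (fun k => k + t) '' K'} := by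
  haveI : CompactSpace K' := isCompact_iff_compactSpace.mp hK
  have h0 : (0:ℕ) < N := hN
  set i0 : Fin N := ⟨0, h0⟩ with hi0
  have hset : {x : EuclideanSpace ℝ (Fin N) | ∃ t : ℝ, ∀ i, x i ∈ (fun k => k + t) '' K'}
      = Prod.fst '' {p : EuclideanSpace ℝ (Fin N) × K' | ∀ i, p.1 i - p.1 i0 + (p.2 : ℝ) ∈ K'} := by
    ext x
    constructor
    · rintro ⟨t, h⟩
      obtain ⟨k, hk, hxk⟩ := h i0
      refine ⟨(x, ⟨k, hk⟩), fun i => ?_, rfl⟩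
      obtain ⟨k', hk', hx'⟩ := h i
      have : x i - x i0 + k = k' := by
        simp only at hxk hx'
        rw [← hxk, ← hx']; ring
      simpa [this] using hk'
    · rintro ⟨⟨y, k⟩, h, rfl⟩
      exact ⟨y i0 - (k:ℝ), fun i => ⟨y i - y i0 + k, h i, by ring⟩⟩
  rw [hset]
  apply isClosedMap_fst_of_compactSpace
  have : {p : EuclideanSpace ℝ (Fin N) × K' | ∀ i, p.1 i - p.1 i0 + (p.2 : ℝ) ∈ K'}
      = ⋂ i : Fin N, {p : EuclideanSpace ℝ (Fin N) × K' | p.1 i - p.1 i0 + (p.2 : ℝ) ∈ K'} := by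
    ext p; simp
  rw [this]
  refine isClosed_iInter fun i => hK.isClosed.preimage ?_
  exact (((EuclideanSpace.proj i).continuous.comp continuous_fst).sub
      ((EuclideanSpace.proj i0).continuous.comp continuous_fst)).add
      (continuous_subtype_val.comp continuous_snd)
end

section
/- Let P ⊆ ℝ be a compact set with no isolated points such that every nonempty relatively open subset of P has positive Lebesgue measure, let K' ⊆ ℝ be compact with dim_p K' < 1, and let N > 1/(1 - dim_p K'). If J_0,...,J_{N-1} are closed intervals whose interiors each meet P, then there exist pairwise disjoint closed intervals I_i ⊆ J_i whose interiors meet P such that no translate of K' contains one point from each I_i ∩ P; i.e. the product ∏_{i<N}(I_i ∩ P) is disjoint from F_N = {(x_i) : ∃ t, ∀ i, x_i ∈ K' + t}. -/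
open Filter Set MeasureTheory
open scoped Pointwise ENNReal

/-!
Choose `β > dim_p K'` with `β N < N - 1` and cover `K'` by countably many sets `A n` of upper box
dimension `< β`. At scale `ε`, the points `k + t • 1` with `k i ∈ A (m i)` and `|t| ≤ M` lie in
`O(ε^(-β N - 1))` cubes of side `4 ε`, a set of measure `O(ε^(N - 1 - β N)) → 0`. So
`F = K'^N + ℝ • 1` is Lebesgue-null, and closed because `K'` is compact. As `∏ (J_i° ∩ P)` has
positive measure, it contains a point `x ∉ F` with distinct coordinates; small cubes around `x`
then have pairwise disjoint factors inside the `J_i` and miss `F`.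
-/

open Topology Metric

theorem ENNReal.exists_lt_ofReal_mul_lt_sub_one {d : ℝ≥0∞} {N : ℕ} (hN : (1 - d)⁻¹ < N) :
    ∃ β : ℝ, d < ENNReal.ofReal β ∧ β * N < N - 1 := by
  have hN0 : (0 : ℝ) < N := by
    rcases Nat.eq_zero_or_pos N with rfl | h
    · simp at hN
    · exact_mod_cast h
  have hd : d < 1 - (N : ℝ≥0∞)⁻¹ := lt_tsub_comm.1 (by simpa using ENNReal.inv_lt_inv.2 hN)
  obtain ⟨β, hβ, hdβ, hβN⟩ := ENNReal.lt_iff_exists_real_btwn.1 hd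
  refine ⟨β, hdβ, ?_⟩
  have hβN' : β < 1 - (N : ℝ)⁻¹ := by
    rwa [← ENNReal.ofReal_natCast, ← ENNReal.ofReal_inv_of_pos hN0, ← ENNReal.ofReal_one,
      ← ENNReal.ofReal_sub _ (by positivity), ENNReal.ofReal_lt_ofReal_iff_of_nonneg hβ] at hβN
  calc β * N < (1 - (N : ℝ)⁻¹) * N := by gcongr
    _ = N - 1 := by field_simp

theorem exists_finset_ball_cover_of_coverN_lt {α : Type*} [PseudoMetricSpace α] {s : Set α}
    {ε : ℝ} {n : ℝ≥0∞} (h : coverN s ε < n) :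
    ∃ t : Finset α, s ⊆ ⋃ x ∈ t, ball x ε ∧ (t.card : ℝ≥0∞) < n := by
  simpa only [coverN, iInf_lt_iff, exists_prop] using h

theorem le_rpow_neg_of_log_div_log_inv_lt {n ε b : ℝ} (hn : 0 ≤ n) (hε₀ : 0 < ε) (hε₁ : ε < 1)
    (h : Real.log n / Real.log ε⁻¹ < b) : n ≤ ε ^ (-b) := by
  rcases hn.eq_or_lt with rfl | hn
  · positivity
  have hlog : 0 < Real.log ε⁻¹ := Real.log_pos ((one_lt_inv₀ hε₀).2 hε₁)
  rw [div_lt_iff₀ hlog, ← Real.log_rpow (inv_pos.2 hε₀), Real.inv_rpow hε₀.le,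
    ← Real.rpow_neg hε₀.le] at h
  exact ((Real.log_lt_log_iff hn (by positivity)).1 h).le

theorem eventually_exists_finset_ball_cover_card_le {α : Type*} [PseudoMetricSpace α]
    {s : Set α} {b : ℝ} (h : ubDim s < ENNReal.ofReal b) :
    ∀ᶠ ε in 𝓝[>] (0 : ℝ), ∃ t : Finset α, s ⊆ ⋃ x ∈ t, ball x ε ∧ (t.card : ℝ) ≤ 2 * ε ^ (-b) := by
  classical
  have hb : 0 < b := ENNReal.ofReal_pos.1 (h.trans_le' zero_le)
  filter_upwards [eventually_lt_of_limsup_lt h, Ioo_mem_nhdsGT one_pos] with ε hε hε'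
  have hne : coverN s ε ≠ ⊤ := by rintro htop; simp [htop] at hε
  rw [if_neg hne, ENNReal.ofReal_lt_ofReal_iff hb] at hε
  have hcover : (coverN s ε).toReal ≤ ε ^ (-b) :=
    le_rpow_neg_of_log_div_log_inv_lt ENNReal.toReal_nonneg hε'.1 hε'.2 hε
  obtain ⟨t, hst, ht⟩ :=
    exists_finset_ball_cover_of_coverN_lt (ENNReal.lt_add_right hne one_ne_zero)
  refine ⟨t, hst, ?_⟩
  have ht' : (t.card : ℝ) < (coverN s ε).toReal + 1 := by
    simpa [ENNReal.toReal_add hne] using (ENNReal.toReal_lt_toReal (by simp) (by finiteness)).2 ht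
  have : 1 ≤ ε ^ (-b) := Real.one_le_rpow_of_pos_of_le_one_of_nonpos hε'.1 hε'.2.le (by linarith)
  linarith

theorem exists_finset_ball_cover_Icc {M ε : ℝ} (hM : 0 ≤ M) (hε₀ : 0 < ε) (hε₁ : ε ≤ 1) :
    ∃ G : Finset ℝ, Icc (-M) M ⊆ ⋃ s ∈ G, ball s ε ∧ (G.card : ℝ) ≤ (2 * M + 2) / ε := by
  refine ⟨(Finset.range (⌊2 * M / ε⌋₊ + 1)).image fun j : ℕ => -M + ε * j, ?_, ?_⟩
  · intro x hx
    set j := ⌊(x + M) / ε⌋₊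
    have hj₁ : (j : ℝ) ≤ (x + M) / ε := Nat.floor_le (div_nonneg (by linarith [hx.1]) hε₀.le)
    have hj₂ : (x + M) / ε < j + 1 := Nat.lt_floor_add_one _
    have hj : j ∈ Finset.range (⌊2 * M / ε⌋₊ + 1) :=
      Finset.mem_range_succ_iff.2 (Nat.floor_mono (by gcongr; linarith [hx.2]))
    refine mem_iUnion₂.2 ⟨-M + ε * j, Finset.mem_image_of_mem _ hj, ?_⟩
    rw [le_div_iff₀ hε₀] at hj₁
    rw [div_lt_iff₀ hε₀] at hj₂
    rw [Real.ball_eq_Ioo]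
    constructor <;> nlinarith
  · calc ((Finset.image _ (Finset.range (⌊2 * M / ε⌋₊ + 1))).card : ℝ)
        ≤ ⌊2 * M / ε⌋₊ + 1 := by exact_mod_cast Finset.card_image_le.trans (by simp)
      _ ≤ 2 * M / ε + 1 := by gcongr; exact Nat.floor_le (by positivity)
      _ ≤ (2 * M + 2) / ε := by
        rw [add_div]; gcongr; rw [le_div_iff₀ hε₀]; linarith

theorem volume_le_of_subset_biUnion_ball {ι : Type*} [Fintype ι] {s : Set (ι → ℝ)}
    {t : Finset (ι → ℝ)} {r : ℝ} (hr : 0 < r) (hs : s ⊆ ⋃ u ∈ t, ball u r) :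
    volume s ≤ ENNReal.ofReal (t.card * (2 * r) ^ Fintype.card ι) := by
  calc volume s ≤ ∑ u ∈ t, volume (ball u r) :=
        (measure_mono hs).trans (measure_biUnion_finset_le _ _)
    _ = _ := by simp [Real.volume_pi_ball _ hr, ENNReal.ofReal_mul]

theorem volume_pi_add_image_smul_one_le {ι : Type*} [Fintype ι] {A : ι → Set ℝ} {T : Set ℝ}
    {ε : ℝ} (hε : 0 < ε) {tA : ι → Finset ℝ} (htA : ∀ i, A i ⊆ ⋃ x ∈ tA i, ball x ε)
    {tT : Finset ℝ} (htT : T ⊆ ⋃ s ∈ tT, ball s ε) :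
    volume (univ.pi A + (fun t : ℝ => t • (1 : ι → ℝ)) '' T) ≤
      ENNReal.ofReal ((∏ i, ((tA i).card : ℝ)) * tT.card * (4 * ε) ^ Fintype.card ι) := by
  classical
  have hcover : univ.pi A + (fun t : ℝ => t • (1 : ι → ℝ)) '' T ⊆
      ⋃ v ∈ (Fintype.piFinset tA ×ˢ tT).image fun p => p.1 + p.2 • 1, ball v (2 * ε) := by
    rintro _ ⟨k, hk, _, ⟨t, ht, rfl⟩, rfl⟩
    obtain ⟨s, hs, hts⟩ := mem_iUnion₂.1 (htT ht)
    choose u hu hku using fun i => mem_iUnion₂.1 (htA i (hk i (mem_univ i)))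
    refine mem_iUnion₂.2 ⟨u + s • 1, Finset.mem_image.2 ⟨(u, s), Finset.mem_product.2
      ⟨Fintype.mem_piFinset.2 hu, hs⟩, rfl⟩, ?_⟩
    have hku' : dist k u < ε := (dist_pi_lt_iff hε).2 hku
    have hts' : dist (t • (1 : ι → ℝ)) (s • 1) < ε := by
      simpa only [Pi.smul_def, smul_eq_mul, Pi.one_apply, mul_one] using
        (dist_pi_const_le (β := ι) t s).trans_lt hts
    calc dist (k + t • 1) (u + s • 1) ≤ dist k u + dist (t • (1 : ι → ℝ)) (s • 1) :=
          dist_add_add_le _ _ _ _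
      _ < 2 * ε := by linarith
  refine (volume_le_of_subset_biUnion_ball (by positivity) hcover).trans ?_
  rw [show 2 * (2 * ε) = 4 * ε by ring]
  gcongr
  calc (((Fintype.piFinset tA ×ˢ tT).image _).card : ℝ)
      ≤ (Fintype.piFinset tA ×ˢ tT).card := by exact_mod_cast Finset.card_image_le
    _ = _ := by simp [Finset.card_product, Fintype.card_piFinset]

theorem volume_pi_add_image_smul_one_Icc_eq_zero {ι : Type*} [Fintype ι] {A : ι → Set ℝ}
    {b : ℝ} (hA : ∀ i, ubDim (A i) < ENNReal.ofReal b)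
    (hb : b * Fintype.card ι < Fintype.card ι - 1) {M : ℝ} (hM : 0 ≤ M) :
    volume (univ.pi A + (fun t : ℝ => t • (1 : ι → ℝ)) '' Icc (-M) M) = 0 := by
  set n := Fintype.card ι
  set η : ℝ := n - 1 - b * n
  set C : ℝ := (2 * M + 2) * 2 ^ n * 4 ^ n with hC
  have hbound : ∀ᶠ ε in 𝓝[>] (0 : ℝ),
      volume (univ.pi A + (fun t : ℝ => t • (1 : ι → ℝ)) '' Icc (-M) M) ≤
        ENNReal.ofReal (C * ε ^ η) := by
    filter_upwards [eventually_all.2 fun i => eventually_exists_finset_ball_cover_card_le (hA i),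
      Ioo_mem_nhdsGT one_pos] with ε hcover hε
    choose tA htA htA_card using hcover
    obtain ⟨G, hG, hG_card⟩ := exists_finset_ball_cover_Icc hM hε.1 hε.2.le
    refine (volume_pi_add_image_smul_one_le hε.1 htA hG).trans (ENNReal.ofReal_le_ofReal ?_)
    have hε₀ := hε.1
    calc (∏ i, ((tA i).card : ℝ)) * G.card * (4 * ε) ^ n
        ≤ (∏ _i : ι, 2 * ε ^ (-b)) * ((2 * M + 2) / ε) * (4 * ε) ^ n := by
          gcongr with i
          exact htA_card i
      _ = C * ε ^ η := by
          have hpow : ∏ _i : ι, 2 * ε ^ (-b) = 2 ^ n * (ε ^ (b * n))⁻¹ := by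
            rw [Finset.prod_const, Finset.card_univ, mul_pow, ← Real.rpow_mul_natCast hε₀.le,
              neg_mul, Real.rpow_neg hε₀.le]
          rw [hpow, Real.rpow_sub hε₀, Real.rpow_sub hε₀, Real.rpow_natCast, Real.rpow_one]
          field_simp
          rw [hC]
          ring
  have hlim : Tendsto (fun ε : ℝ => ENNReal.ofReal (C * ε ^ η)) (𝓝[>] 0) (𝓝 0) := by
    have : Tendsto (fun ε : ℝ => C * ε ^ η) (𝓝[>] 0) (𝓝 (C * 0 ^ η)) :=
      ((Real.continuousAt_rpow_const 0 η (Or.inr (by linarith))).tendsto.mono_left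
        nhdsWithin_le_nhds).const_mul C
    simpa [Real.zero_rpow (show η ≠ 0 by linarith)] using ENNReal.tendsto_ofReal this
  exact le_antisymm (ge_of_tendsto hlim hbound) zero_le

theorem volume_pi_add_span_one_eq_zero {ι : Type*} [Fintype ι] {K : Set ℝ} {b : ℝ}
    (hK : packingDim K < ENNReal.ofReal b) (hb : b * Fintype.card ι < Fintype.card ι - 1) :
    volume (univ.pi (fun _ : ι => K) + (ℝ ∙ (1 : ι → ℝ) : Set (ι → ℝ))) = 0 := by
  obtain ⟨A, hKA, hA⟩ : ∃ A : ℕ → Set ℝ, K ⊆ ⋃ n, A n ∧ ⨆ n, ubDim (A n) < ENNReal.ofReal b := by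
    simpa only [packingDim, iInf_lt_iff, exists_prop] using hK
  have hsub : univ.pi (fun _ : ι => K) + (ℝ ∙ (1 : ι → ℝ) : Set (ι → ℝ)) ⊆
      ⋃ (m : ι → ℕ) (M : ℕ),
        univ.pi (fun i => A (m i)) + (fun t : ℝ => t • (1 : ι → ℝ)) '' Icc (-M) M := by
    rintro _ ⟨k, hk, _, hv, rfl⟩
    obtain ⟨t, rfl⟩ := Submodule.mem_span_singleton.1 hv
    choose m hm using fun i => mem_iUnion.1 (hKA (hk i (mem_univ i)))
    obtain ⟨M, hM⟩ := exists_nat_ge |t|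
    exact mem_iUnion₂.2 ⟨m, M, k, fun i _ => hm i, t • 1, ⟨t, abs_le.1 hM, rfl⟩, rfl⟩
  refine measure_mono_null hsub (measure_iUnion_null fun m => measure_iUnion_null fun M => ?_)
  exact volume_pi_add_image_smul_one_Icc_eq_zero (fun i => (le_iSup _ (m i)).trans_lt hA) hb
    M.cast_nonneg

theorem volume_setOf_apply_eq_apply {ι : Type*} [Fintype ι] {i j : ι} (hij : i ≠ j) :
    volume {x : ι → ℝ | x i = x j} = 0 := by
  classical
  let f : (ι → ℝ) →ₗ[ℝ] ℝ := LinearMap.proj (R := ℝ) (φ := fun _ : ι => ℝ) i - LinearMap.proj j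
  have hf : {x : ι → ℝ | x i = x j} = LinearMap.ker f := by
    ext x; simp [f, sub_eq_zero]
  rw [hf]
  refine Measure.addHaar_submodule _ _ fun htop => ?_
  have : Pi.single i 1 ∈ LinearMap.ker f := htop ▸ Submodule.mem_top
  simp [f, hij.symm] at this

theorem ae_injective (ι : Type*) [Fintype ι] : ∀ᵐ x : ι → ℝ, Function.Injective x := by
  have : {x : ι → ℝ | ¬ Function.Injective x} = ⋃ i, ⋃ j, ⋃ (_ : i ≠ j), {x | x i = x j} := by
    ext x; simp only [Function.Injective]; aesop
  rw [ae_iff, this]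
  exact measure_iUnion_null fun i => measure_iUnion_null fun j =>
    measure_iUnion_null volume_setOf_apply_eq_apply

theorem eventually_pairwise_disjoint_closedBall {ι X : Type*} [Finite ι] [MetricSpace X]
    {x : ι → X} (hx : Function.Injective x) :
    ∀ᶠ δ in 𝓝 (0 : ℝ), Pairwise fun i j => Disjoint (closedBall (x i) δ) (closedBall (x j) δ) := by
  have : ∀ i j, ∀ᶠ δ in 𝓝 (0 : ℝ), i ≠ j → Disjoint (closedBall (x i) δ) (closedBall (x j) δ) := by
    intro i j
    by_cases hij : i = j
    · exact Eventually.of_forall fun _ h => (h hij).elim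
    have : 0 < dist (x i) (x j) / 2 := by have := dist_pos.2 (hx.ne hij); positivity
    filter_upwards [Iio_mem_nhds this] with δ hδ _
    exact closedBall_disjoint_closedBall (by rw [mem_Iio] at hδ; linarith)
  simpa [Pairwise, eventually_all] using this

theorem stmt3_general (P : Set ℝ)
    (hPpos : ∀ U : Set ℝ, IsOpen U → (U ∩ P).Nonempty → 0 < volume (U ∩ P))
    (K' : Set ℝ) (hK : IsCompact K')
    (N : ℕ) (hNbig : ((1 : ℝ≥0∞) - packingDim K')⁻¹ < (N : ℝ≥0∞))
    (a b : Fin N → ℝ) (hJ : ∀ i, (Set.Ioo (a i) (b i) ∩ P).Nonempty) :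
    ∃ c d : Fin N → ℝ,
      (∀ i, Set.Icc (c i) (d i) ⊆ Set.Icc (a i) (b i)) ∧
      (Pairwise fun i j => Disjoint (Set.Icc (c i) (d i)) (Set.Icc (c j) (d j))) ∧
      (∀ i, (Set.Ioo (c i) (d i) ∩ P).Nonempty) ∧
      ∀ x : Fin N → ℝ, (∀ i, x i ∈ Set.Icc (c i) (d i) ∩ P) →
        ¬ ∃ t : ℝ, ∀ i, x i ∈ (fun k => k + t) '' K' := by
  obtain ⟨β, hKβ, hβN⟩ := ENNReal.exists_lt_ofReal_mul_lt_sub_one hNbig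
  set F : Set (Fin N → ℝ) := univ.pi (fun _ => K') + (ℝ ∙ (1 : Fin N → ℝ) : Set (Fin N → ℝ))
  have hF_closed : IsClosed F :=
    (Submodule.closed_of_finiteDimensional _).add_left_of_isCompact (isCompact_univ_pi fun _ => hK)
  have hF_null : volume F = 0 := volume_pi_add_span_one_eq_zero hKβ (by simpa using hβN)
  have hE : volume (univ.pi fun i => Ioo (a i) (b i) ∩ P) ≠ 0 := by
    rw [volume_pi_pi]
    exact Finset.prod_ne_zero_iff.2 fun i _ => (hPpos _ isOpen_Ioo (hJ i)).ne'
  obtain ⟨x, hxE, hx_inj, hxF⟩ := Measure.exists_mem_of_measure_ne_zero_of_ae hE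
    (ae_restrict_of_ae ((ae_injective _).and (measure_eq_zero_iff_ae_notMem.1 hF_null)))
  have hxJ i : Icc (a i) (b i) ∈ 𝓝 (x i) := Icc_mem_nhds (hxE i trivial).1.1 (hxE i trivial).1.2
  have hsmall := (eventually_pairwise_disjoint_closedBall hx_inj).and
    ((eventually_all.2 fun i => eventually_closedBall_subset (hxJ i)).and
      (eventually_closedBall_subset (hF_closed.isOpen_compl.mem_nhds hxF)))
  obtain ⟨δ, ⟨hdisj, hJδ, hFδ⟩, hδ⟩ :=
    ((hsmall.filter_mono (nhdsWithin_le_nhds (s := Ioi 0))).and self_mem_nhdsWithin).exists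
  have hIcc i : Icc (x i - δ) (x i + δ) = closedBall (x i) δ := (Real.closedBall_eq_Icc ..).symm
  refine ⟨fun i => x i - δ, fun i => x i + δ, fun i => hIcc i ▸ hJδ i,
    fun i j hij => by simpa only [hIcc] using hdisj hij,
    fun i => ⟨x i, ⟨by linarith, by linarith⟩, (hxE i trivial).2⟩, ?_⟩
  rintro y hy ⟨t, hyt⟩
  choose k hk hkt using hyt
  have hyδ : y ∈ closedBall x δ := by
    rw [closedBall_pi _ hδ.le, mem_univ_pi]
    exact fun i => hIcc i ▸ (hy i).1
  refine hFδ hyδ ⟨k, fun i _ => hk i, t • 1, Submodule.mem_span_singleton.2 ⟨t, rfl⟩, ?_⟩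
  ext i
  simp [← hkt i]

theorem stmt3 (P : Set ℝ) (hPcomp : IsCompact P)
    (hPacc : ∀ x ∈ P, AccPt x (Filter.principal P))
    (hPpos : ∀ U : Set ℝ, IsOpen U → (U ∩ P).Nonempty → 0 < volume (U ∩ P))
    (K' : Set ℝ) (hK : IsCompact K') (hdim : packingDim K' < 1)
    (N : ℕ) (hNbig : ((1 : ℝ≥0∞) - packingDim K')⁻¹ < (N : ℝ≥0∞))
    (a b : Fin N → ℝ) (hJ : ∀ i, (Set.Ioo (a i) (b i) ∩ P).Nonempty) :
    ∃ c d : Fin N → ℝ,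
      (∀ i, Set.Icc (c i) (d i) ⊆ Set.Icc (a i) (b i)) ∧
      (Pairwise fun i j => Disjoint (Set.Icc (c i) (d i)) (Set.Icc (c j) (d j))) ∧
      (∀ i, (Set.Ioo (c i) (d i) ∩ P).Nonempty) ∧
      ∀ x : Fin N → ℝ, (∀ i, x i ∈ Set.Icc (c i) (d i) ∩ P) →
        ¬ ∃ t : ℝ, ∀ i, x i ∈ (fun k => k + t) '' K' :=
  stmt3_general P hPpos K' hK N hNbig a b hJ
end

section
/- Assume the Continuum Hypothesis. Then there exists X ⊆ ℝ with positive Lebesgue outer measure such that C ∩ (X + t) is countable for every t ∈ ℝ, where C is the standard middle-thirds Cantor set. Consequently μ_Cantor(X+t) = 0 for every t. -/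
/-!
Under CH, list the Borel null sets together with the translates `C - t` of the Cantor set in
order type `ω₁`, and pick `x_α` outside the union of the countably many sets listed up to
stage `α`. The set `X = {x_α}` meets each listed set `N_β` only in points `x_α` with `α < β`,
so in a countable set. In particular `X` lies in no Borel null set, so it has positive outer
measure, while `C ∩ (X + t)` is countable. A measure carried by `C` without atoms therefore
vanishes on every `X + t`.
-/

open MeasureTheory Cardinal Set

universe u v

theorem volume_cantorSet : volume cantorSet = 0 := by
  -- `(· / 3)` and `((2 + ·) / 3)` are the homotheties of ratio `1/3` centred at `0` and `1`.
  have hhalves : cantorSet = AffineMap.homothety 0 (3⁻¹ : ℝ) '' cantorSet ∪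
      AffineMap.homothety 1 (3⁻¹ : ℝ) '' cantorSet := by
    convert cantorSet_eq_union_halves using 3 <;>
      simp only [AffineMap.homothety_apply, vsub_eq_sub, vadd_eq_add, smul_eq_mul] <;> ring
  have hle : volume cantorSet ≤ 3⁻¹ * volume cantorSet + 3⁻¹ * volume cantorSet :=
    calc volume cantorSet = volume (AffineMap.homothety 0 (3⁻¹ : ℝ) '' cantorSet ∪
          AffineMap.homothety 1 (3⁻¹ : ℝ) '' cantorSet) := congrArg volume hhalves
      _ ≤ _ := measure_union_le _ _
      _ = _ := by simp
  have hfin : volume cantorSet ≠ ⊤ := isCompact_cantorSet.measure_lt_top.ne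
  by_contra hpos
  have hone : (1 : ENNReal) ≤ 3⁻¹ + 3⁻¹ :=
    (ENNReal.mul_le_mul_iff_left hpos hfin).1 (by rwa [one_mul, add_mul])
  have hlt : (3⁻¹ + 3⁻¹ : ENNReal) < 1 := by
    rw [← ENNReal.inv_three_add_inv_three]
    exact ENNReal.lt_add_right (by simp) (by simp)
  exact hone.not_gt hlt

theorem mk_measurableSet_real_le_continuum : #{s : Set ℝ // MeasurableSet s} ≤ 𝔠 := by
  have := MeasurableSpace.cardinal_measurableSet_le_continuum (α := ℝ) (s := range Iio)
  rw [← borel_eq_generateFrom_Iio, ← BorelSpace.measurable_eq] at this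
  exact this (mk_range_le.trans mk_real.le)

theorem exists_forall_not_subset_countable_inter {α : Type u} {ι : Type v} [MeasurableSpace α]
    (μ : Measure α) [NeZero μ] (N : ι → Set α) (hN : ∀ i, μ (N i) = 0) (hι : #ι ≤ ℵ₁) :
    ∃ X : Set α, (∀ i, ¬X ⊆ N i) ∧ ∀ i, (X ∩ N i).Countable := by
  obtain ⟨f⟩ : Nonempty (ι ↪ (ℵ₁ : Cardinal.{v}).ord.ToType) := by
    rwa [← le_def, mk_toType, card_ord]
  have hIio (a : (ℵ₁ : Cardinal.{v}).ord.ToType) : (Iio a).Countable := by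
    rw [← le_aleph0_iff_set_countable, ← lt_aleph_one_iff]
    simpa using mk_Iio_lt a (by simp)
  have hnull (a) : μ (⋃ i ∈ f ⁻¹' Iic a, N i) = 0 := by
    refine (measure_biUnion_null_iff ?_).2 fun i _ => hN i
    rw [← Iio_insert]
    exact ((hIio a).insert a).preimage f.injective
  have hex (a) : ∃ x, x ∉ ⋃ i ∈ f ⁻¹' Iic a, N i := by
    by_contra! h
    have := hnull a
    rw [eq_univ_of_forall h, Measure.measure_univ_eq_zero] at this
    exact NeZero.ne μ this
  choose x hx using hex
  refine ⟨range x, fun i hi => hx (f i) ?_, fun i => ?_⟩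
  · exact mem_biUnion (le_refl (f i)) (hi ⟨f i, rfl⟩)
  · refine ((hIio (f i)).image x).mono ?_
    rintro _ ⟨⟨b, rfl⟩, hb⟩
    exact ⟨b, mem_Iio.2 (lt_of_not_ge fun h => hx b (mem_biUnion h hb)), rfl⟩

theorem exists_measure_pos_forall_countable_inter {α ι : Type u} [MeasurableSpace α]
    (μ : Measure α) [NeZero μ] (hα : #{s : Set α // MeasurableSet s} ≤ ℵ₁)
    (N : ι → Set α) (hN : ∀ i, μ (N i) = 0) (hι : #ι ≤ ℵ₁) :
    ∃ X : Set α, 0 < μ X ∧ ∀ i, (X ∩ N i).Countable := by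
  let M := {s : Set α // MeasurableSet s ∧ μ s = 0}
  have hM : #M ≤ ℵ₁ := (mk_subtype_mono fun _ hs => hs.1).trans hα
  obtain ⟨X, hX, hXN⟩ := exists_forall_not_subset_countable_inter μ
    (Sum.elim (fun s : M => s.1) N) (by rintro (s | i); exacts [s.2.2, hN i])
    (by simpa using add_le_of_le (aleph0_le_aleph 1) hM hι)
  refine ⟨X, pos_iff_ne_zero.2 fun hX0 => ?_, fun i => hXN (.inr i)⟩
  refine hX (.inl ⟨toMeasurable μ X, measurableSet_toMeasurable μ X, ?_⟩) (subset_toMeasurable μ X)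
  rwa [measure_toMeasurable]

theorem measure_eq_zero_of_countable_inter {α : Type*} [MeasurableSpace α] {μ : Measure α}
    [NullSingletonClass μ] {s t : Set α} (ht : μ tᶜ = 0) (hst : (t ∩ s).Countable) :
    μ s = 0 := by
  rw [← measure_inter_conull ht, inter_comm]
  exact hst.measure_zero μ

theorem stmt6 (hCH : Cardinal.continuum = Cardinal.aleph 1) :
    ∃ X : Set ℝ, 0 < volume X ∧
      (∀ t : ℝ, (cantorSet ∩ (fun x => x + t) '' X).Countable) ∧
      ∀ μ : Measure ℝ, IsProbabilityMeasure μ → μ cantorSetᶜ = 0 → (∀ x : ℝ, μ {x} = 0) →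
        ∀ t : ℝ, μ ((fun x => x + t) '' X) = 0 := by
  have hCH₀ : (𝔠 : Cardinal.{0}) = ℵ₁ := lift_injective (by simpa using hCH)
  obtain ⟨X, hXpos, hXC⟩ := exists_measure_pos_forall_countable_inter volume
    (hCH₀ ▸ mk_measurableSet_real_le_continuum) (fun t : ℝ => (· + t) ⁻¹' cantorSet)
    (fun t => by rw [measure_preimage_add_right, volume_cantorSet]) (by rw [mk_real, hCH₀])
  have hC (t : ℝ) : (cantorSet ∩ (· + t) '' X).Countable := by
    rw [inter_comm, ← image_inter_preimage]
    exact (hXC t).image _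
  refine ⟨X, hXpos, hC, fun μ _ hCc hμ t => ?_⟩
  have : NullSingletonClass μ := ⟨hμ⟩
  exact measure_eq_zero_of_countable_inter hCc (hC t)
end

section
/- Assume cov(N) = cof(N), where N is the ideal of Lebesgue null sets. Then there exists X ⊆ ℝ with positive Lebesgue outer measure such that C ∩ (X + t) is countable for every t ∈ ℝ, where C is a fixed Cantor set. -/
open MeasureTheory

/-- `cov(N)`: the least cardinality of a family of Lebesgue null sets covering `ℝ`. -/
noncomputable def covNull : Cardinal :=
  sInf {c : Cardinal | ∃ S : Set (Set ℝ), Cardinal.mk S = c ∧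
    (∀ s ∈ S, volume s = 0) ∧ ⋃₀ S = Set.univ}

/-- `cof(N)`: the least cardinality of a family of null sets cofinal in the null ideal. -/
noncomputable def cofNull : Cardinal :=
  sInf {c : Cardinal | ∃ S : Set (Set ℝ), Cardinal.mk S = c ∧
    (∀ s ∈ S, volume s = 0) ∧ ∀ t : Set ℝ, volume t = 0 → ∃ s ∈ S, t ⊆ s}

/-!
For a set `C` let `thirdPoints C d` be the set of `z` such that `{0, d, z}` has a translate inside
`C`. Cover the Cantor set by the `2 ^ n` intervals `[a, a + 3⁻ⁿ]` of its `n`-th stage. If `t`,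
`d + t` and `z + t` lie in the intervals at `b`, `a'` and `a`, then `d` is `3⁻ⁿ`-close to `a' - b`
and `z` is `3⁻ⁿ`-close to `a - b`. So `volume (thirdPoints C d)` is at most `2 ^ n · 2 · 3⁻ⁿ` times
the number of pairs `(a', b)` with `a' - b` close to `d`, a bound whose integral over `d` is at most
`4 (8/9)ⁿ`. Hence `thirdPoints C d` is null for almost every `d`.

Under `cov(N) = cof(N) = κ`, index a cofinal family of null sets as `(N i)_{i < κ}` and choose `x i`
by transfinite recursion outside `N i`, outside `x j + {d | thirdPoints C d is not null}` for
`j < i`, and outside the null sets `x a + thirdPoints C (x b - x a)` for `a < b < i`. Each stage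
avoids fewer than `cov(N)` null sets, so the choice is possible. The set `X = {x i}` lies in no
`N i`, hence is not null, and no translate of `C` contains three of its points.
-/

open Set Filter Topology
open scoped ENNReal Cardinal

def thirdPoints (C : Set ℝ) (d : ℝ) : Set ℝ := {z | ∃ t ∈ C, d + t ∈ C ∧ z + t ∈ C}

noncomputable def closePairs (L : Finset ℝ) (r d : ℝ) : Finset (ℝ × ℝ) :=
  (L ×ˢ L).filter fun p => dist d (p.1 - p.2) ≤ r

lemma natCast_card_closePairs (L : Finset ℝ) (r d : ℝ) :
    ((closePairs L r d).card : ℝ≥0∞) =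
      ∑ p ∈ L ×ˢ L, (Metric.closedBall (p.1 - p.2) r).indicator 1 d := by
  classical
  rw [closePairs, Finset.natCast_card_filter]
  exact Finset.sum_congr rfl fun p _ => by
    rw [Set.indicator_apply, Metric.mem_closedBall, Pi.one_apply]

lemma measurable_card_closePairs (L : Finset ℝ) (r : ℝ) :
    Measurable fun d => ((closePairs L r d).card : ℝ≥0∞) := by
  simp only [natCast_card_closePairs]
  exact Finset.measurable_sum _ fun p _ => measurable_one.indicator measurableSet_closedBall

lemma lintegral_card_closePairs (L : Finset ℝ) (r : ℝ) :
    ∫⁻ d, ((closePairs L r d).card : ℝ≥0∞) = L.card ^ 2 * ENNReal.ofReal (2 * r) := by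
  simp only [natCast_card_closePairs]
  rw [lintegral_finsetSum _ fun p _ => measurable_one.indicator measurableSet_closedBall]
  simp only [lintegral_indicator_one measurableSet_closedBall, Real.volume_closedBall,
    Finset.sum_const, Finset.card_product, nsmul_eq_mul, Nat.cast_mul, sq]

lemma volume_thirdPoints_le {L : Finset ℝ} {r : ℝ} {C : Set ℝ} (hC : C ⊆ ⋃ a ∈ L, Icc a (a + r))
    (d : ℝ) :
    volume (thirdPoints C d) ≤ L.card * (closePairs L r d).card * ENNReal.ofReal (2 * r) := by
  have hcover : thirdPoints C d ⊆
      ⋃ a ∈ L, ⋃ p ∈ closePairs L r d, Metric.closedBall (a - p.2) r := by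
    rintro z ⟨t, ht, hdt, hzt⟩
    obtain ⟨a, ha, hza, hza'⟩ := mem_iUnion₂.1 (hC hzt)
    obtain ⟨b, hb, htb, htb'⟩ := mem_iUnion₂.1 (hC ht)
    obtain ⟨b', hb', hdb, hdb'⟩ := mem_iUnion₂.1 (hC hdt)
    refine mem_iUnion₂.2 ⟨a, ha, mem_iUnion₂.2 ⟨(b', b), ?_, ?_⟩⟩
    · simp only [closePairs, Finset.mem_filter, Finset.mem_product]
      refine ⟨⟨hb', hb⟩, ?_⟩
      rw [← Metric.mem_closedBall, Real.closedBall_eq_Icc]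
      constructor <;> linarith
    · rw [Real.closedBall_eq_Icc]; constructor <;> linarith
  calc volume (thirdPoints C d)
      ≤ ∑ a ∈ L, ∑ p ∈ closePairs L r d, volume (Metric.closedBall (a - p.2) r) :=
        (measure_mono hcover).trans <| (measure_biUnion_finset_le _ _).trans <|
          Finset.sum_le_sum fun a _ => measure_biUnion_finset_le _ _
    _ = L.card * (closePairs L r d).card * ENNReal.ofReal (2 * r) := by
        simp only [Real.volume_closedBall, Finset.sum_const, nsmul_eq_mul, mul_assoc]

lemma ae_eq_zero_of_le_of_tendsto_lintegral {α : Type*} [MeasurableSpace α] {μ : Measure α}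
    {f : ℕ → α → ℝ≥0∞} {g : α → ℝ≥0∞} (hf : ∀ n, Measurable (f n))
    (hlim : Tendsto (fun n => ∫⁻ a, f n a ∂μ) atTop (𝓝 0)) (hg : ∀ n a, g a ≤ f n a) :
    ∀ᵐ a ∂μ, g a = 0 := by
  have hinf : ∫⁻ a, ⨅ n, f n a ∂μ = 0 :=
    le_antisymm (ge_of_tendsto' hlim fun n => lintegral_mono fun a => iInf_le _ n) bot_le
  filter_upwards [(lintegral_eq_zero_iff (Measurable.iInf hf)).1 hinf] with a ha
  exact le_antisymm ((le_iInf fun n => hg n a).trans ha.le) bot_le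

noncomputable def cantorLeftEnds : ℕ → Finset ℝ
  | 0 => {0}
  | n + 1 => (cantorLeftEnds n).image (· / 3) ∪ (cantorLeftEnds n).image fun x => (2 + x) / 3

lemma card_cantorLeftEnds_le (n : ℕ) : (cantorLeftEnds n).card ≤ 2 ^ n := by
  induction n with
  | zero => simp [cantorLeftEnds]
  | succ n ih =>
    calc (cantorLeftEnds (n + 1)).card
        ≤ (cantorLeftEnds n).card + (cantorLeftEnds n).card :=
          (Finset.card_union_le _ _).trans (add_le_add Finset.card_image_le Finset.card_image_le)
      _ ≤ 2 ^ (n + 1) := by rw [pow_succ]; omega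

lemma preCantorSet_subset_biUnion_Icc (n : ℕ) :
    preCantorSet n ⊆ ⋃ a ∈ cantorLeftEnds n, Icc a (a + (1 / 3) ^ n) := by
  induction n with
  | zero => simp [cantorLeftEnds]
  | succ n ih =>
    have hr : ((1 : ℝ) / 3) ^ (n + 1) = (1 / 3) ^ n / 3 := by ring
    rintro _ (⟨x, hx, rfl⟩ | ⟨x, hx, rfl⟩) <;> obtain ⟨a, ha, hxa, hxa'⟩ := mem_iUnion₂.1 (ih hx)
    · refine mem_iUnion₂.2 ⟨a / 3, ?_, ?_, ?_⟩
      · simp [cantorLeftEnds, ha]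
      all_goals simp only [hr]; linarith
    · refine mem_iUnion₂.2 ⟨(2 + a) / 3, ?_, ?_, ?_⟩
      · simp [cantorLeftEnds, ha]
      all_goals simp only [hr]; linarith

lemma cantorSet_subset_biUnion_Icc (n : ℕ) :
    cantorSet ⊆ ⋃ a ∈ cantorLeftEnds n, Icc a (a + (1 / 3) ^ n) :=
  (iInter_subset _ n).trans (preCantorSet_subset_biUnion_Icc n)

lemma lintegral_cantor_cover_le (n : ℕ) :
    ∫⁻ d, (cantorLeftEnds n).card * (closePairs (cantorLeftEnds n) ((1 / 3) ^ n) d).card *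
      ENNReal.ofReal (2 * (1 / 3) ^ n) ≤ ENNReal.ofReal (4 * (8 / 9) ^ n) := by
  rw [lintegral_mul_const _ ((measurable_card_closePairs _ _).const_mul _),
    lintegral_const_mul _ (measurable_card_closePairs _ _), lintegral_card_closePairs]
  have hL : ((cantorLeftEnds n).card : ℝ≥0∞) ≤ ENNReal.ofReal (2 ^ n) := by
    rw [← ENNReal.ofReal_natCast]
    exact ENNReal.ofReal_le_ofReal (by exact_mod_cast card_cantorLeftEnds_le n)
  calc _ ≤ ENNReal.ofReal (2 ^ n) *
        (ENNReal.ofReal (2 ^ n) ^ 2 * ENNReal.ofReal (2 * (1 / 3) ^ n)) *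
        ENNReal.ofReal (2 * (1 / 3) ^ n) := by gcongr
    _ = ENNReal.ofReal (4 * (8 / 9) ^ n) := by
        rw [← ENNReal.ofReal_pow (by positivity), ← ENNReal.ofReal_mul (by positivity),
          ← ENNReal.ofReal_mul (by positivity), ← ENNReal.ofReal_mul (by positivity)]
        congr 1
        rw [show (8 / 9 : ℝ) = 2 * 2 * 2 * (1 / 3) * (1 / 3) by norm_num]
        simp only [mul_pow]
        ring

theorem ae_volume_thirdPoints_cantorSet_eq_zero :
    ∀ᵐ d, volume (thirdPoints cantorSet d) = 0 := by
  refine ae_eq_zero_of_le_of_tendsto_lintegral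
    (fun n => ((measurable_card_closePairs _ _).const_mul _).mul_const _)
    (tendsto_of_tendsto_of_tendsto_of_le_of_le tendsto_const_nhds ?_ (fun _ => zero_le)
      lintegral_cantor_cover_le)
    fun n => volume_thirdPoints_le (cantorSet_subset_biUnion_Icc n)
  rw [← ENNReal.ofReal_zero, ← mul_zero (4 : ℝ)]
  exact ENNReal.tendsto_ofReal
    ((tendsto_pow_atTop_nhds_zero_of_lt_one (by norm_num) (by norm_num)).const_mul 4)

lemma sUnion_ne_univ_of_mk_lt_covNull {F : Set (Set ℝ)} (hF : #F < covNull)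
    (h0 : ∀ s ∈ F, volume s = 0) : ⋃₀ F ≠ univ :=
  fun hU => hF.not_ge (csInf_le' ⟨F, rfl, h0, hU⟩)

lemma aleph0_le_covNull : ℵ₀ ≤ covNull := by
  refine le_csInf ⟨_, range fun x : ℝ => {x}, rfl, ?_, ?_⟩ ?_
  · rintro _ ⟨x, rfl⟩
    exact Real.volume_singleton
  · rw [sUnion_range, iUnion_of_singleton]
  · rintro _ ⟨S, rfl, h0, hU⟩
    by_contra! hS
    have hnull : volume (⋃₀ S) = 0 :=
      (measure_sUnion_null_iff (Cardinal.lt_aleph0_iff_set_finite.1 hS).countable).2 h0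
    simp [hU] at hnull

lemma exists_cofinal_null_family {ι : Type} (hι : #ι = cofNull) :
    ∃ N : ι → Set ℝ, (∀ i, volume (N i) = 0) ∧ ∀ t, volume t = 0 → ∃ i, t ⊆ N i := by
  obtain ⟨S, hS, h0, hcof⟩ := csInf_mem (s := {c : Cardinal | ∃ S : Set (Set ℝ), #S = c ∧
      (∀ s ∈ S, volume s = 0) ∧ ∀ t : Set ℝ, volume t = 0 → ∃ s ∈ S, t ⊆ s})
    ⟨_, {s | volume s = 0}, rfl, fun _ hs => hs, fun t ht => ⟨t, ht, subset_rfl⟩⟩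
  obtain ⟨e⟩ := Cardinal.eq.1 (hι.trans hS.symm)
  refine ⟨fun i => e i, fun i => h0 _ (e i).2, fun t ht => ?_⟩
  obtain ⟨s, hs, hts⟩ := hcof t ht
  exact ⟨e.symm ⟨s, hs⟩, by simpa using hts⟩

theorem exists_transfinite_seq {ι α : Type*} [LT ι] [WellFoundedLT ι]
    {P : (i : ι) → (∀ j < i, α) → α → Prop} (h : ∀ i f, ∃ a, P i f a) :
    ∃ x : ι → α, ∀ i, P i (fun j _ => x j) (x i) := by
  choose g hg using h
  refine ⟨wellFounded_lt.fix g, fun i => ?_⟩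
  rw [wellFounded_lt.fix_eq g i]
  exact hg _ _

open Cardinal in
theorem exists_transfinite_seq_avoiding {ι : Type} [LinearOrder ι] [WellFoundedLT ι]
    (hι : ∀ i : ι, #(Iio i) < covNull) {N : ι → Set ℝ} (hN : ∀ i, volume (N i) = 0)
    {E : ℝ → Set ℝ} (hE : ∀ᵐ d, volume (E d) = 0) :
    ∃ x : ι → ℝ, (∀ i, x i ∉ N i) ∧ ∀ a b c, a < b → b < c → x c - x a ∉ E (x b - x a) := by
  set B := {d | volume (E d) ≠ 0}
  have hB : volume B = 0 := ae_iff.1 hE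
  have hshift (a : ℝ) (s : Set ℝ) : volume ((· - a) ⁻¹' s) = volume s := by
    simpa only [sub_eq_add_neg] using measure_preimage_add_right volume (-a) s
  -- clause `x b - x a ∉ B` makes all of them null.
  let F (i : ι) (f : ∀ j < i, ℝ) : Set (Set ℝ) :=
    {N i} ∪ range (fun j : Iio i => (· - f j j.2) ⁻¹' B) ∪
      ({s | volume s = 0} ∩
        range fun p : Iio i × Iio i => (· - f p.1 p.1.2) ⁻¹' E (f p.2 p.2.2 - f p.1 p.1.2))
  have hF (i : ι) (f : ∀ j < i, ℝ) : ∃ y, y ∉ ⋃₀ F i f := by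
    have hℵ := aleph0_le_covNull
    have hcard : #(F i f) < covNull := calc
      #(F i f) ≤ 1 + #(Iio i) + #(Iio i) * #(Iio i) := by
        refine (mk_union_le _ _).trans (add_le_add ((mk_union_le _ _).trans
          (add_le_add (mk_singleton _).le mk_range_le)) ?_)
        exact (mk_le_mk_of_subset inter_subset_right).trans (mk_range_le.trans (by simp))
      _ < covNull := add_lt_of_lt hℵ (add_lt_of_lt hℵ (one_lt_aleph0.trans_le hℵ) (hι i))
          (mul_lt_of_lt hℵ (hι i) (hι i))
    refine (ne_univ_iff_exists_notMem _).1 (sUnion_ne_univ_of_mk_lt_covNull hcard ?_)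
    rintro s ((rfl | ⟨j, rfl⟩) | ⟨hs, -⟩)
    exacts [hN i, (hshift _ _).trans hB, hs]
  obtain ⟨x, hx⟩ := exists_transfinite_seq hF
  refine ⟨x, fun i hi => hx i ⟨N i, Or.inl (Or.inl rfl), hi⟩, fun a b c hab hbc hmem => ?_⟩
  have hdiff : x b - x a ∉ B := fun h => hx b ⟨_, Or.inl (Or.inr ⟨⟨a, hab⟩, rfl⟩), h⟩
  have hnull : volume ((· - x a) ⁻¹' E (x b - x a)) = 0 := (hshift _ _).trans (not_not.1 hdiff)
  exact hx c ⟨_, Or.inr ⟨hnull, ⟨⟨a, hab.trans hbc⟩, ⟨b, hbc⟩⟩, rfl⟩, hmem⟩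

theorem stmt8 (h : covNull = cofNull) :
    ∃ X : Set ℝ, 0 < volume X ∧
      ∀ t : ℝ, (cantorSet ∩ (fun x => x + t) '' X).Countable := by
  obtain ⟨N, hN, hNcof⟩ :=
    exists_cofinal_null_family (ι := covNull.ord.ToType) (by rw [Cardinal.mk_ord_toType, h])
  obtain ⟨x, hxN, hx⟩ := exists_transfinite_seq_avoiding
    (fun i => by simpa using Cardinal.mk_Iio_lt i (by simp)) hN
    ae_volume_thirdPoints_cantorSet_eq_zero
  refine ⟨range x, pos_iff_ne_zero.2 fun h0 => ?_, fun t => ?_⟩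
  · obtain ⟨i, hi⟩ := hNcof _ h0
    exact hxN i (hi (mem_range_self i))
  have hfin : {i | x i + t ∈ cantorSet}.Finite :=
    Set.finite_of_forall_not_lt_lt fun a ha b hb c hc hab hbc =>
      hx a b c hab hbc
        ⟨x a + t, ha, by rwa [← add_assoc, sub_add_cancel], by rwa [← add_assoc, sub_add_cancel]⟩
  refine (hfin.image fun i => x i + t).countable.mono ?_
  rintro _ ⟨hC, _, ⟨i, rfl⟩, rfl⟩
  exact ⟨i, hC, rfl⟩
end

section
/- If F ⊆ Σ is k-fat above s (with k ≥ 1) and V is a finite set, then F \ V is also k-fat above s. -/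
/-- A finite sequence `s` is an element of `Σ = ⋃_l ∏_{m<l} Z_{m+3}` iff `s(i) < i + 3`
for every `i < |s|`. -/
def ValidSeq (s : List ℕ) : Prop := ∀ i, i < s.length → s.getD i 0 < i + 3

/-- `S` is a (finite) `k`-slalom: all values are finite sets of size at most `k`,
and all but finitely many values are empty. (Only the values at indices `≥ |s|`
are relevant for a slalom above `s`.) -/
def IsSlalom (k : ℕ) (S : ℕ → Finset ℕ) : Prop :=
  (∀ i, (S i).card ≤ k) ∧ ∃ N, ∀ i, N ≤ i → S i = ∅

/-- The height of a slalom above `s`: the least `i ≥ |s|` such that `S j = ∅` for all `j ≥ i`. -/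
noncomputable def slalomHt (s : List ℕ) (S : ℕ → Finset ℕ) : ℕ :=
  sInf {i | s.length ≤ i ∧ ∀ j, i ≤ j → S j = ∅}

/-- `t` escapes the slalom `S` above `s`: `t ⊇ s`, `|t| ≥ ht(S)` and
`t(i) ∉ S(i)` for all `i ∈ [|s|, |t|)`. -/
def Escapes (s t : List ℕ) (S : ℕ → Finset ℕ) : Prop :=
  s <+: t ∧ slalomHt s S ≤ t.length ∧
    ∀ i, s.length ≤ i → i < t.length → t.getD i 0 ∉ S i

/-- `F` is `k`-fat above `s`: every `k`-slalom above `s` is escaped by some `t ∈ F`. -/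
def Fat (k : ℕ) (s : List ℕ) (F : Set (List ℕ)) : Prop :=
  ∀ S : ℕ → Finset ℕ, IsSlalom k S → ∃ t ∈ F, Escapes s t S

theorem stmt10 (s : List ℕ) (hs : ValidSeq s) (k : ℕ) (hk : 1 ≤ k)
    (F : Set (List ℕ)) (hF : F ⊆ {t | ValidSeq t ∧ s <+: t}) (hfat : Fat k s F)
    (V : Set (List ℕ)) (hV : V.Finite) :
    Fat k s (F \ V) := by
  intro S hS
  obtain ⟨hcard, N, hN⟩ := hS
  set M : ℕ := max (max N s.length) (hV.toFinset.sup List.length) + 1 with hM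
  have hMN : N ≤ M := le_trans (le_max_left _ _) (le_trans (le_max_left _ _) (Nat.le_succ _))
  have hMs : s.length ≤ M := le_trans (le_max_right _ _) (le_trans (le_max_left _ _) (Nat.le_succ _))
  have hMV : ∀ v ∈ V, v.length ≤ M := by
    intro v hv
    exact le_trans (Finset.le_sup (hV.mem_toFinset.mpr hv)) (le_trans (le_max_right _ _) (Nat.le_succ _))
  set S' : ℕ → Finset ℕ := fun i => if i = M then {0} else S i with hS'
  have hS'slalom : IsSlalom k S' := by
    constructor
    · intro i
      by_cases h : i = M
      · simp [hS', h, hk]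
      · simp only [hS', if_neg h]; exact hcard i
    · refine ⟨M + 1, fun i hi => ?_⟩
      have h1 : i ≠ M := by omega
      simp only [hS', if_neg h1]
      exact hN i (by omega)
  obtain ⟨t, htF, hpre, hht, hesc⟩ := hfat S' hS'slalom
  -- height of S' is at least M+1
  have hmem : slalomHt s S' ∈ {i | s.length ≤ i ∧ ∀ j, i ≤ j → S' j = ∅} := by
    apply Nat.sInf_mem
    refine ⟨M + 1, by omega, fun j hj => ?_⟩
    have h1 : j ≠ M := by omega
    simp only [hS', if_neg h1]
    exact hN j (by omega)
  have hht' : M < slalomHt s S' := by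
    by_contra h
    push_neg at h
    have := hmem.2 M h
    simp [hS'] at this
  have htlen : M < t.length := lt_of_lt_of_le hht' hht
  refine ⟨t, ⟨htF, fun htV => ?_⟩, hpre, ?_, ?_⟩
  · exact absurd (hMV t htV) (by omega)
  · -- slalomHt s S ≤ t.length
    have : slalomHt s S ≤ M := by
      apply Nat.sInf_le
      exact ⟨hMs, fun j hj => hN j (by omega)⟩
    omega
  · intro i hi hi2
    by_cases h : i = M
    · subst h
      rw [hN M hMN]
      exact Finset.notMem_empty _
    · have := hesc i hi hi2
      simpa only [hS', if_neg h] using this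
end

section
/- Let k ≥ 1, s ∈ Σ, and suppose H ⊆ {t ∈ Σ : t ⊇ s} is k-fat above s. Then H contains a subset consisting of pairwise incomparable (under extension) sequences that is (k−1)-fat above s. -/
/-! Enumerate the `(k-1)`-slaloms as `S₀, S₁, …` and pick `tₙ ∈ H` escaping `Sₙ` by recursion.
A `(k-1)`-slalom leaves one free slot per level for a `k`-fat set, and we spend it on
separating `tₙ` from its predecessors: one extra point at a level `M` beyond all earlier
lengths forces `|tₙ| > M`, and at level `|tₘ| - 1` the last value of `tₘ` is forbidden, so
`tₙ` does not extend `tₘ`. Since the `tₘ` have distinct lengths, this costs one point per level. -/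

open Finset

lemma List.IsPrefix.getD_eq {α : Type*} {u t : List α} (h : u <+: t) {i : ℕ}
    (hi : i < u.length) (d : α) : u.getD i d = t.getD i d := by
  obtain ⟨r, rfl⟩ := h
  rw [List.getD_append _ _ _ _ hi]

lemma countable_setOf_isSlalom (k : ℕ) : {S | IsSlalom k S}.Countable := by
  refine (Set.countable_range fun l : List (Finset ℕ) => fun i => l.getD i ∅).mono ?_
  rintro S ⟨-, N, hN⟩
  refine ⟨(List.range N).map S, funext fun i => ?_⟩
  by_cases hi : i < N
  · simp [List.getD_eq_getElem?_getD, hi]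
  · simp [List.getD_eq_getElem?_getD, hi, hN i (not_lt.1 hi)]

section SlalomHeight

variable {s t : List ℕ} {S S' : ℕ → Finset ℕ}

lemma slalomHt_spec (hS : ∃ N, ∀ i, N ≤ i → S i = ∅) :
    s.length ≤ slalomHt s S ∧ ∀ j, slalomHt s S ≤ j → S j = ∅ := by
  obtain ⟨N, hN⟩ := hS
  have hne : {i | s.length ≤ i ∧ ∀ j, i ≤ j → S j = ∅}.Nonempty :=
    ⟨max N s.length, le_max_right _ _, fun j hj => hN j (le_of_max_le_left hj)⟩
  exact Nat.sInf_mem hne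

lemma lt_slalomHt_of_nonempty (hS : ∃ N, ∀ i, N ≤ i → S i = ∅) {i : ℕ} (hi : (S i).Nonempty) :
    i < slalomHt s S := by
  by_contra! h
  exact hi.ne_empty ((slalomHt_spec hS).2 i h)

lemma slalomHt_mono (hSS' : ∀ i, S i ⊆ S' i) (hS' : ∃ N, ∀ i, N ≤ i → S' i = ∅) :
    slalomHt s S ≤ slalomHt s S' :=
  Nat.sInf_le ⟨(slalomHt_spec hS').1,
    fun j hj => Finset.subset_empty.1 ((slalomHt_spec hS').2 j hj ▸ hSS' j)⟩

lemma Escapes.mono (h : Escapes s t S') (hSS' : ∀ i, S i ⊆ S' i)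
    (hS' : ∃ N, ∀ i, N ≤ i → S' i = ∅) : Escapes s t S :=
  ⟨h.1, (slalomHt_mono hSS' hS').trans h.2.1, fun i hsi hit hmem => h.2.2 i hsi hit (hSS' i hmem)⟩

lemma Escapes.lt_length (h : Escapes s t S) (hS : ∃ N, ∀ i, N ≤ i → S i = ∅) {i : ℕ}
    (hi : (S i).Nonempty) : i < t.length :=
  (lt_slalomHt_of_nonempty hS hi).trans_le h.2.1

end SlalomHeight

section Separation

def lastValues (P : Finset (List ℕ)) (i : ℕ) : Finset ℕ :=
  (P.filter (·.length = i + 1)).image (·.getD i 0)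

variable {P : Finset (List ℕ)}

lemma card_lastValues_le_one (hP : Set.InjOn List.length (P : Set (List ℕ))) (i : ℕ) :
    (lastValues P i).card ≤ 1 := by
  refine card_image_le.trans (card_le_one.2 fun u hu v hv => hP ?_ ?_ ?_)
  · exact (mem_filter.1 hu).1
  · exact (mem_filter.1 hv).1
  · rw [(mem_filter.1 hu).2, (mem_filter.1 hv).2]

lemma lastValues_eq_empty {i : ℕ} (h : ∀ u ∈ P, u.length ≤ i) : lastValues P i = ∅ := by
  simp only [lastValues, image_eq_empty, filter_eq_empty_iff]
  exact fun u hu => by have := h u hu; omega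

lemma getD_mem_lastValues {u : List ℕ} (hu : u ∈ P) (hpos : 0 < u.length) :
    u.getD (u.length - 1) 0 ∈ lastValues P (u.length - 1) :=
  mem_image_of_mem _ (mem_filter.2 ⟨hu, by omega⟩)

def Staggered (s : List ℕ) (P : Finset (List ℕ)) : Prop :=
  (∀ u ∈ P, s.length < u.length) ∧ Set.InjOn List.length (P : Set (List ℕ))

lemma staggered_empty (s : List ℕ) : Staggered s ∅ :=
  ⟨fun _ h => absurd h (notMem_empty _), by simp⟩

lemma Staggered.insert {s t : List ℕ} (hP : Staggered s P) (hst : s.length < t.length)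
    (hPt : ∀ u ∈ P, u.length < t.length) : Staggered s (insert t P) := by
  refine ⟨fun u hu => ?_, ?_⟩
  · rcases mem_insert.1 hu with rfl | hu
    exacts [hst, hP.1 u hu]
  · have ht : t ∉ P := fun ht => (hPt t ht).false
    rw [coe_insert, Set.injOn_insert (mod_cast ht)]
    exact ⟨hP.2, fun ⟨u, hu, hut⟩ => (hPt u hu).ne hut⟩

end Separation

lemma Fat.exists_escapes_not_isPrefix {k : ℕ} {s : List ℕ} {H : Set (List ℕ)}
    (hfat : Fat k s H) (hk : 1 ≤ k) {S : ℕ → Finset ℕ} (hS : IsSlalom (k - 1) S)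
    {P : Finset (List ℕ)} (hP : Staggered s P) :
    ∃ t ∈ H, Escapes s t S ∧ s.length < t.length ∧
      ∀ u ∈ P, u.length < t.length ∧ ¬ u <+: t := by
  obtain ⟨hcard, N, hN⟩ := hS
  set M := N + s.length + P.sup List.length
  have hPM : ∀ u ∈ P, u.length ≤ M := fun u hu => (le_sup hu).trans (by omega)
  set S' : ℕ → Finset ℕ := fun i => S i ∪ if i = M then {0} else lastValues P i
  have hS'N : ∃ N, ∀ i, N ≤ i → S' i = ∅ := ⟨M + 1, fun i hi => by
    have hiM : i ≠ M := by omega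
    simp [S', hN i (by omega), hiM,
      lastValues_eq_empty fun u hu => (hPM u hu).trans (by omega : M ≤ i)]⟩
  have hS' : IsSlalom k S' := by
    refine ⟨fun i => (card_union_le _ _).trans ?_, hS'N⟩
    have : (if i = M then {0} else lastValues P i).card ≤ 1 := by
      split_ifs
      exacts [(card_singleton _).le, card_lastValues_le_one hP.2 i]
    have := hcard i
    omega
  obtain ⟨t, htH, hesc⟩ := hfat S' hS'
  have hMt : M < t.length := hesc.lt_length hS'N (by simp [S'])
  refine ⟨t, htH, hesc.mono (fun i => subset_union_left) hS'N, by omega,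
    fun u hu => ⟨(hPM u hu).trans_lt hMt, fun hut => ?_⟩⟩
  have hsu := hP.1 u hu
  have huM := hPM u hu
  -- `t` must avoid the last value of `u`, which `S'` forbids at level `|u| - 1`
  refine hesc.2.2 (u.length - 1) (by omega) (by omega) ?_
  have hlast : u.length - 1 ≠ M := by omega
  rw [← hut.getD_eq (by omega) 0]
  simp only [S', mem_union, hlast, if_false]
  exact Or.inr (getD_mem_lastValues hu (by omega))

lemma exists_seq_of_forall_finset {α : Type*} [DecidableEq α] {Q : ℕ → α → Prop}
    {R : α → α → Prop} {Good : Finset α → Prop} (h0 : Good ∅)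
    (step : ∀ n P, Good P → ∃ t, Q n t ∧ (∀ u ∈ P, R u t) ∧ Good (insert t P)) :
    ∃ T : ℕ → α, (∀ n, Q n (T n)) ∧ ∀ m n, m < n → R (T m) (T n) := by
  choose f hf using fun n (P : {P // Good P}) => step n P.1 P.2
  let g : ℕ → {P // Good P} :=
    fun n => Nat.rec ⟨∅, h0⟩ (fun m P => ⟨insert (f m P) P.1, (hf m P).2.2⟩) n
  have hg : ∀ m n, m < n → f m (g m) ∈ (g n).1 := by
    intro m n hmn
    induction n, hmn using Nat.le_induction with
    | base => exact mem_insert_self _ _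
    | succ n _ ih => exact mem_insert_of_mem ih
  exact ⟨fun n => f n (g n), fun n => (hf n _).1, fun m n hmn => (hf n _).2.1 _ (hg m n hmn)⟩

theorem stmt11_general (s : List ℕ) (k : ℕ) (hk : 1 ≤ k)
    (H : Set (List ℕ)) (hfat : Fat k s H) :
    ∃ H' ⊆ H, (∀ t₁ ∈ H', ∀ t₂ ∈ H', t₁ ≠ t₂ → ¬ t₁ <+: t₂ ∧ ¬ t₂ <+: t₁) ∧
      Fat (k - 1) s H' := by
  classical
  obtain ⟨e, he⟩ := (countable_setOf_isSlalom (k - 1)).exists_eq_range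
    ⟨fun _ => ∅, fun _ => by simp, 0, fun _ _ => rfl⟩
  obtain ⟨T, hT, hsep⟩ := exists_seq_of_forall_finset
    (Q := fun n t => t ∈ H ∧ Escapes s t (e n)) (R := fun u t => u.length < t.length ∧ ¬ u <+: t)
    (staggered_empty s) fun n P hP => by
      obtain ⟨t, htH, hesc, hst, hPt⟩ :=
        hfat.exists_escapes_not_isPrefix hk (he.superset (Set.mem_range_self n)) hP
      exact ⟨t, ⟨htH, hesc⟩, hPt, hP.insert hst fun u hu => (hPt u hu).1⟩
  have incomparable : ∀ m n, m < n → ¬ T m <+: T n ∧ ¬ T n <+: T m := fun m n hmn =>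
    ⟨(hsep m n hmn).2, fun h => h.length_le.not_gt (hsep m n hmn).1⟩
  refine ⟨Set.range T, Set.range_subset_iff.2 fun n => (hT n).1, ?_, fun S hS => ?_⟩
  · rintro _ ⟨m, rfl⟩ _ ⟨n, rfl⟩ hne
    rcases lt_trichotomy m n with h | rfl | h
    exacts [incomparable m n h, absurd rfl hne, (incomparable n m h).symm]
  · obtain ⟨n, rfl⟩ := he.subset hS
    exact ⟨T n, Set.mem_range_self n, (hT n).2⟩

theorem stmt11 (s : List ℕ) (hs : ValidSeq s) (k : ℕ) (hk : 1 ≤ k)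
    (H : Set (List ℕ)) (hH : H ⊆ {t | ValidSeq t ∧ s <+: t}) (hfat : Fat k s H) :
    ∃ H' ⊆ H, (∀ t₁ ∈ H', ∀ t₂ ∈ H', t₁ ≠ t₂ → ¬ t₁ <+: t₂ ∧ ¬ t₂ <+: t₁) ∧
      Fat (k - 1) s H' :=
  stmt11_general s k hk H hfat
end

section
/- Let k > 0, s_0 ∈ Σ, F ⊆ {s ∈ Σ : s ⊇ s_0} be k-fat above s_0, and σ ∈ Σ with s_0 || σ. Then {t ∈ F : t || σ} is (k−1)-fat above s_0. -/
/-- `s || t`: the sequences are compatible, i.e. `s(i) + t(i) ≠ i + 2` for every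
`i < min(|s|, |t|)`. -/
def Compat (s t : List ℕ) : Prop :=
  ∀ i, i < min s.length t.length → s.getD i 0 + t.getD i 0 ≠ i + 2

theorem stmt16 (k : ℕ) (hk : 0 < k) (s₀ : List ℕ) (hs₀ : ValidSeq s₀)
    (F : Set (List ℕ)) (hF : F ⊆ {s | ValidSeq s ∧ s₀ <+: s}) (hfat : Fat k s₀ F)
    (σ : List ℕ) (hσ : ValidSeq σ) (hcomp : Compat s₀ σ) :
    Fat (k - 1) s₀ {t ∈ F | Compat t σ} := by
  intro S hS
  set S' : ℕ → Finset ℕ := fun i =>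
    if s₀.length ≤ i ∧ i < σ.length then insert (i + 2 - σ.getD i 0) (S i) else S i with hS'def
  have hsub : ∀ i, S i ⊆ S' i := by
    intro i x hx
    simp only [hS'def]
    split <;> simp [hx]
  have hS' : IsSlalom k S' := by
    constructor
    · intro i
      simp only [hS'def]
      split
      · calc (insert (i + 2 - σ.getD i 0) (S i)).card ≤ (S i).card + 1 :=
              Finset.card_insert_le _ _
          _ ≤ (k - 1) + 1 := by exact Nat.add_le_add_right (hS.1 i) 1
          _ = k := Nat.succ_pred_eq_of_pos hk
      · exact le_trans (hS.1 i) (Nat.sub_le k 1)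
    · obtain ⟨N, hN⟩ := hS.2
      refine ⟨max N σ.length, fun i hi => ?_⟩
      simp only [hS'def]
      rw [if_neg, hN i (le_trans (le_max_left _ _) hi)]
      intro ⟨_, h2⟩
      exact absurd (le_trans (le_max_right _ _) hi) (not_le.mpr h2)
  obtain ⟨t, htF, hpre, hht, hesc⟩ := hfat S' hS'
  have hht' : slalomHt s₀ S ≤ slalomHt s₀ S' := by
    apply csInf_le_csInf (OrderBot.bddBelow _)
    · obtain ⟨N, hN⟩ := hS'.2
      exact ⟨max N s₀.length, le_max_right _ _, fun j hj =>
        hN j (le_trans (le_max_left _ _) hj)⟩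
    · rintro i ⟨h1, h2⟩
      exact ⟨h1, fun j hj => Finset.subset_empty.mp (h2 j hj ▸ hsub j)⟩
  have hgetD : ∀ i, i < s₀.length → t.getD i 0 = s₀.getD i 0 := by
    intro i hi
    obtain ⟨u, rfl⟩ := hpre
    rw [List.getD_append _ _ _ _ hi]
  refine ⟨t, ⟨htF, ?_⟩, hpre, le_trans hht' hht, fun i h1 h2 => ?_⟩
  · intro i hi
    rcases lt_or_ge i s₀.length with h | h
    · rw [hgetD i h]
      exact hcomp i (lt_min h (lt_of_lt_of_le hi (min_le_right _ _)))
    · have hit : i < t.length := lt_of_lt_of_le hi (min_le_left _ _)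
      have hiσ : i < σ.length := lt_of_lt_of_le hi (min_le_right _ _)
      have hne : t.getD i 0 ∉ insert (i + 2 - σ.getD i 0) (S i) := by
        simpa [hS'def, h, hiσ] using hesc i h hit
      intro heq
      have hσi : σ.getD i 0 ≤ i + 2 := Nat.lt_succ_iff.mp (hσ i hiσ)
      have : t.getD i 0 = i + 2 - σ.getD i 0 := by omega
      exact hne (this ▸ Finset.mem_insert_self _ _)
  · exact fun hx => hesc i h1 h2 (hsub i hx)
end
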